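/- Let s be a finite shift-bounded binary word. If a a* is a prefix of s for some non-empty word a (a* the bitwise complement of a), then s = a a*. -/

import Mathlib

open Filter MeasureTheory

/-- Left shift by `k` on infinite binary sequences. -/
def shiftSeq (k : ℕ) (x : ℕ → Bool) : ℕ → Bool := fun n => x (n + k)

/-- Strict lexicographic order on infinite binary sequences (`false < true`). -/
def seqLt (a b : ℕ → Bool) : Prop :=
  ∃ n, (∀ k < n, a k = b k) ∧ a n = false ∧ b n = true

def seqLe (a b : ℕ → Bool) : Prop := a = b ∨ seqLt a b

/-- A finite word viewed as an infinite sequence (padded with zeros). -/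
def wordSeq (w : List Bool) : ℕ → Bool := fun n => w.getD n false

/-- Bitwise complement of an infinite sequence. -/
def complSeq (a : ℕ → Bool) : ℕ → Bool := fun n => ! a n

/-- `F(c) = {x : c' ≥ σⁿ(x) ≥ c for all n ≥ 0}` for an infinite bound `c`. -/
def Fset (c : ℕ → Bool) : Set (ℕ → Bool) :=
  {x | ∀ n : ℕ, seqLe c (shiftSeq n x) ∧ seqLe (shiftSeq n x) (complSeq c)}

/-- The real number in `[0,1]` with binary expansion `x`. -/
noncomputable def seqVal (x : ℕ → Bool) : ℝ :=
  ∑' n : ℕ, (cond (x n) (1 : ℝ) 0) / 2 ^ (n + 1)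

/-- The periodic infinite sequence `w^∞`. -/
def perSeq (w : List Bool) : ℕ → Bool := fun n => w.getD (n % w.length) false

/-- `s̃`: the word `s` with its last symbol inverted. -/
def flipLast (s : List Bool) : List Bool :=
  s.dropLast ++ [! s.getD (s.length - 1) false]

/-- `f(s) = s̃ s'` where `s'` is the bitwise complement of `s`. -/
def fW (s : List Bool) : List Bool := flipLast s ++ s.map (fun b => !b)

/-- A finite word `s` is shift-bounded: `s' > σⁿ(s) > s` for `0 < n < |s|`,
comparisons via the embedding of finite words into infinite sequences
(`s` padded with zeros, `s'` is the complement of the padded sequence);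
by convention `[false]` is excluded. -/
def ShiftBounded (s : List Bool) : Prop :=
  s ≠ [false] ∧ ∀ n, 0 < n → n < s.length →
    seqLt (wordSeq s) (wordSeq (s.drop n)) ∧
    seqLt (wordSeq (s.drop n)) (complSeq (wordSeq s))

/-- Prepend a finite word to an infinite sequence. -/
def appendSeq (w : List Bool) (t : ℕ → Bool) : ℕ → Bool :=
  fun n => if n < w.length then w.getD n false else t (n - w.length)

/-- `w^k`: the word `w` repeated `k` times. -/
def repWord (k : ℕ) (w : List Bool) : List Bool :=
  (List.replicate k w).foldr (· ++ ·) []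

/-- The infinite concatenation of the finite words `g 0, g 1, g 2, …`
(assuming all are nonempty, the `n`-th symbol is obtained from the first
`n+1` blocks). -/
def concatSeq (g : ℕ → List Bool) : ℕ → Bool :=
  fun n => (((List.range (n + 1)).map g).foldr (· ++ ·) []).getD n false

/-!
Write `s = a a' t` and suppose `t ≠ []`. Shift-boundedness at `|a a'|` and at `|a|` gives
`a a' t < t < a t'`, where `t` is padded with zeros and `t'` is the complement of the padded
sequence. Any sequence `x` with `u u' x < x < u x'` must begin with `u`, and its tail then
satisfies the same pair of inequalities with `u'` in place of `u`; so `x = u u' u u' ⋯`. Since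
one of `u, u'` begins with `true`, such an `x` is not eventually `false`, whereas the padded `t` is.
-/

lemma List.getD_map_not_of_lt {w : List Bool} {n : ℕ} (h : n < w.length) :
    (w.map not).getD n false = !w.getD n false := by
  simp [List.getD_eq_getElem?_getD, h]

section appendSeq

variable (w v : List Bool) (x : ℕ → Bool)

lemma appendSeq_of_lt {n : ℕ} (h : n < w.length) : appendSeq w x n = w.getD n false := by
  simp [appendSeq, h]

lemma appendSeq_of_le {n : ℕ} (h : w.length ≤ n) : appendSeq w x n = x (n - w.length) := by
  simp [appendSeq, Nat.not_lt.mpr h]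

lemma appendSeq_append : appendSeq (w ++ v) x = appendSeq w (appendSeq v x) := by
  funext n
  rcases lt_or_ge n w.length with h | h
  · rw [appendSeq_of_lt _ _ (by simp; omega), appendSeq_of_lt _ _ h, List.getD_append _ _ _ _ h]
  · rw [appendSeq_of_le w _ h]
    rcases lt_or_ge n (w.length + v.length) with h' | h'
    · rw [appendSeq_of_lt _ _ (by simp; omega), appendSeq_of_lt _ _ (by omega),
        List.getD_append_right _ _ _ _ h]
    · rw [appendSeq_of_le _ _ (by simp; omega), appendSeq_of_le _ _ (by omega)]
      congr 1; simp; omega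

lemma complSeq_appendSeq : complSeq (appendSeq w x) = appendSeq (w.map not) (complSeq x) := by
  funext n
  rcases lt_or_ge n w.length with h | h
  · rw [complSeq, appendSeq_of_lt _ _ h, appendSeq_of_lt _ _ (by simpa using h),
      List.getD_map_not_of_lt h]
  · rw [complSeq, appendSeq_of_le _ _ h, appendSeq_of_le _ _ (by simpa using h)]
    simp [complSeq]

lemma wordSeq_append : wordSeq (w ++ v) = appendSeq w (wordSeq v) := by
  funext n
  rcases lt_or_ge n w.length with h | h
  · rw [wordSeq, List.getD_append _ _ _ _ h, appendSeq_of_lt _ _ h]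
  · rw [wordSeq, List.getD_append_right _ _ _ _ h, appendSeq_of_le _ _ h]; rfl

lemma appendSeq_shiftSeq_of_forall_lt (h : ∀ i < w.length, x i = w.getD i false) :
    appendSeq w (shiftSeq w.length x) = x := by
  funext n
  rcases lt_or_ge n w.length with hn | hn
  · rw [appendSeq_of_lt _ _ hn, h n hn]
  · rw [appendSeq_of_le _ _ hn, shiftSeq, Nat.sub_add_cancel hn]

end appendSeq

lemma shiftSeq_zero (x : ℕ → Bool) : shiftSeq 0 x = x := rfl

lemma shiftSeq_shiftSeq (m n : ℕ) (x : ℕ → Bool) :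
    shiftSeq m (shiftSeq n x) = shiftSeq (n + m) x := by
  funext k; simp only [shiftSeq]; ac_rfl

lemma wordSeq_of_length_le {w : List Bool} {n : ℕ} (h : w.length ≤ n) : wordSeq w n = false :=
  List.getD_eq_default _ _ h

lemma seqLt_asymm {p q : ℕ → Bool} (hpq : seqLt p q) : ¬ seqLt q p := by
  rintro ⟨m, hm, hqm, hpm⟩
  obtain ⟨n, hn, hpn, hqn⟩ := hpq
  rcases lt_trichotomy n m with h | rfl | h
  · rw [hm n h, hpn] at hqn; exact Bool.false_ne_true hqn
  · rw [hpn] at hpm; exact Bool.false_ne_true hpm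
  · rw [← hn m h, hpm] at hqm; exact Bool.false_ne_true hqm.symm

lemma seqLt.of_appendSeq {w : List Bool} {p q : ℕ → Bool}
    (h : seqLt (appendSeq w p) (appendSeq w q)) : seqLt p q := by
  obtain ⟨n, hk, hf, ht⟩ := h
  have hn : w.length ≤ n := by
    by_contra hn
    rw [appendSeq_of_lt _ _ (Nat.not_le.mp hn)] at hf ht
    rw [hf] at ht; exact Bool.false_ne_true ht
  refine ⟨n - w.length, fun k hk' => ?_, ?_, ?_⟩
  · simpa [appendSeq_of_le _ _ (Nat.le_add_left w.length k)] using hk (k + w.length) (by omega)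
  · rwa [appendSeq_of_le _ _ hn] at hf
  · rwa [appendSeq_of_le _ _ hn] at ht

def Squeezed (u : List Bool) (x : ℕ → Bool) : Prop :=
  seqLt (appendSeq (u ++ u.map not) x) x ∧ seqLt x (appendSeq u (complSeq x))

namespace Squeezed

variable {u : List Bool} {x : ℕ → Bool}

lemma getD_eq (h : Squeezed u x) : ∀ i < u.length, x i = u.getD i false := by
  obtain ⟨n, hagree, hxn, hun⟩ := h.2
  suffices hn : u.length ≤ n from fun i hi => by
    simpa [appendSeq_of_lt _ _ hi] using hagree i (by omega)
  by_contra! hn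
  rw [appendSeq_of_lt _ _ hn] at hun
  -- otherwise `x` and `u u' x` first differ at `n`, where `x` is smaller
  refine seqLt_asymm h.1 ⟨n, fun k hk => ?_, hxn, ?_⟩
  · rw [appendSeq_of_lt _ _ (by simp; omega), List.getD_append _ _ _ _ (by omega),
      hagree k hk, appendSeq_of_lt _ _ (by omega)]
  · rw [appendSeq_of_lt _ _ (by simp; omega), List.getD_append _ _ _ _ hn, hun]

lemma shift (h : Squeezed u x) : Squeezed (u.map not) (shiftSeq u.length x) := by
  have hx := appendSeq_shiftSeq_of_forall_lt u x h.getD_eq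
  obtain ⟨h₁, h₂⟩ := h
  rw [← hx] at h₁ h₂
  refine ⟨.of_appendSeq (w := u) ?_, .of_appendSeq (w := u) ?_⟩
  · rwa [List.map_involutive_iff.2 Bool.involutive_not u, ← appendSeq_append,
      ← List.append_assoc, appendSeq_append (u ++ _)]
  · rwa [← complSeq_appendSeq]

lemma exists_shiftSeq_mul (h : Squeezed u x) (m : ℕ) :
    ∃ v : List Bool, v.length = u.length ∧ Squeezed v (shiftSeq (u.length * m) x) := by
  induction m with
  | zero => exact ⟨u, rfl, by rwa [Nat.mul_zero, shiftSeq_zero]⟩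
  | succ m ih =>
    obtain ⟨v, hv, hvx⟩ := ih
    refine ⟨v.map not, by simpa using hv, ?_⟩
    simpa [shiftSeq_shiftSeq, hv, Nat.mul_succ] using hvx.shift

lemma exists_ge_eq_true (h : Squeezed u x) (hu : u ≠ []) (N : ℕ) : ∃ n ≥ N, x n = true := by
  have hlen : 0 < u.length := List.length_pos_iff.mpr hu
  obtain ⟨v, hv, hvx⟩ := h.exists_shiftSeq_mul N
  have h₀ := hvx.getD_eq 0 (by omega)
  have h₁ := hvx.shift.getD_eq 0 (by simpa [hv])
  rw [shiftSeq, zero_add] at h₀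
  rw [List.getD_map_not_of_lt (by omega), hv, shiftSeq_shiftSeq, shiftSeq,
    zero_add] at h₁
  cases hv0 : v.getD 0 false
  · exact ⟨u.length * N + u.length, by nlinarith, by rw [h₁, hv0]; rfl⟩
  · exact ⟨u.length * N, by nlinarith, by rw [h₀, hv0]⟩

end Squeezed

theorem stmt4 (s a : List Bool) (hs : ShiftBounded s) (ha : a ≠ [])
    (hpre : (a ++ a.map (fun b => !b)) <+: s) :
    s = a ++ a.map (fun b => !b) := by
  obtain ⟨t, rfl⟩ := hpre
  rcases eq_or_ne t [] with rfl | ht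
  · exact List.append_nil _
  exfalso
  have ha' : 0 < a.length := List.length_pos_iff.mpr ha
  have ht' : 0 < t.length := List.length_pos_iff.mpr ht
  have hsq : Squeezed a (wordSeq t) := by
    constructor
    · have h := (hs.2 (a ++ a.map not).length (by simp; omega) (by simp; omega)).1
      rwa [List.drop_left, wordSeq_append] at h
    · have h := (hs.2 a.length ha' (by simp; omega)).2
      rw [List.append_assoc, List.drop_left, wordSeq_append, wordSeq_append, wordSeq_append,
        complSeq_appendSeq, complSeq_appendSeq,
        List.map_involutive_iff.2 Bool.involutive_not a] at h
      exact .of_appendSeq h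
  obtain ⟨n, hn, htrue⟩ := hsq.exists_ge_eq_true ha t.length
  rw [wordSeq_of_length_le hn] at htrue
  exact Bool.false_ne_true htrue
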